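/- Let κ₀ > 0 be a real number. If κ(x,y) ≥ κ₀ for every pair of adjacent vertices x, y of G, then the diameter of G satisfies diam(G) ≤ 2/κ₀, i.e. d(x,y) ≤ 2/κ₀ for all vertices x, y. -/

import Mathlib

open Finset Filter Topology

noncomputable section

/-- A coupling between two (probability) mass functions `μ` and `ν` on a finite
vertex set: a matrix with values in `[0,1]` whose row sums are `μ` and whose
column sums are `ν`. -/
def IsCoupling {V : Type*} [Fintype V] (A : V → V → ℝ) (μ ν : V → ℝ) : Prop :=
  (∀ x y, 0 ≤ A x y ∧ A x y ≤ 1) ∧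
  (∀ x, ∑ y, A x y = μ x) ∧
  (∀ y, ∑ x, A x y = ν y)

/-- The (1-)Wasserstein distance between two mass functions on the vertex set of a
graph, with respect to the graph distance. -/
def Wass {V : Type*} [Fintype V] (G : SimpleGraph V) (μ ν : V → ℝ) : ℝ :=
  sInf {c | ∃ A : V → V → ℝ, IsCoupling A μ ν ∧
    c = ∑ x, ∑ y, A x y * (G.dist x y : ℝ)}

/-- The probability measure `m_x^α`: mass `α` at `x`, mass `(1-α)/d_x` at each
neighbor of `x`, and `0` elsewhere. -/
def mMeas {V : Type*} [Fintype V] [DecidableEq V] (G : SimpleGraph V)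
    [DecidableRel G.Adj] (α : ℝ) (x : V) : V → ℝ :=
  fun z => if z = x then α else if G.Adj x z then (1 - α) / (G.degree x : ℝ) else 0

/-- The `α`-Ricci curvature `κ_α(x,y) = 1 - W(m_x^α, m_y^α)/d(x,y)`. -/
def kappaAlpha {V : Type*} [Fintype V] [DecidableEq V] (G : SimpleGraph V)
    [DecidableRel G.Adj] (α : ℝ) (x y : V) : ℝ :=
  1 - Wass G (mMeas G α x) (mMeas G α y) / (G.dist x y : ℝ)

/-- The Lin–Lu–Yau Ricci curvature `κ(x,y) = lim_{α→1⁻} κ_α(x,y)/(1-α)`. -/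
def kappa {V : Type*} [Fintype V] [DecidableEq V] (G : SimpleGraph V)
    [DecidableRel G.Adj] (x y : V) : ℝ :=
  limUnder (𝓝[<] (1 : ℝ)) (fun α => kappaAlpha G α x y / (1 - α))

/-- The (non-normalized) graph Laplacian `(Δf)(x) = d_x f(x) - ∑_{y ~ x} f(y)`. -/
def lap {V : Type*} [Fintype V] [DecidableEq V] (G : SimpleGraph V)
    [DecidableRel G.Adj] (f : V → ℝ) (x : V) : ℝ :=
  (G.degree x : ℝ) * f x - ∑ y ∈ G.neighborFinset x, f y

end

/-!
Along a geodesic `x = v₀ ~ v₁ ~ ⋯ ~ v_d = y`, the triangle inequality for the Wasserstein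
distance gives `W(m_x^α, m_y^α) ≤ ∑ᵢ W(m_{vᵢ}^α, m_{vᵢ₊₁}^α) = d - ∑ᵢ κ_α(vᵢ, vᵢ₊₁)`, while
testing against the 1-Lipschitz function `d(x, ·)` gives `W(m_x^α, m_y^α) ≥ d - 2(1 - α)`.
Hence `∑ᵢ κ_α(vᵢ, vᵢ₊₁) / (1 - α) ≤ 2`, and letting `α → 1` yields `d κ₀ ≤ 2`.

The limit defining `κ` exists: `m^α` is affine in `α` and `W` is jointly convex, so
`κ_α ≥ t κ_{α'}` whenever `1 - α = t (1 - α')`, i.e. `κ_α / (1 - α)` is nondecreasing; the same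
lower bound on `W` bounds it by `2` on edges.
-/

section Transport

variable {V : Type*} [Fintype V]

noncomputable def transportCost (G : SimpleGraph V) (A : V → V → ℝ) : ℝ :=
  ∑ x, ∑ y, A x y * (G.dist x y : ℝ)

theorem le_one_of_mem_stdSimplex {μ : V → ℝ} (hμ : μ ∈ stdSimplex ℝ V) (x : V) : μ x ≤ 1 :=
  hμ.2 ▸ single_le_sum (fun y _ => hμ.1 y) (mem_univ x)

theorem IsCoupling.of_nonneg {A : V → V → ℝ} {μ ν : V → ℝ} (hμ : μ ∈ stdSimplex ℝ V)
    (hA : ∀ x y, 0 ≤ A x y) (hrow : ∀ x, ∑ y, A x y = μ x) (hcol : ∀ y, ∑ x, A x y = ν y) :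
    IsCoupling A μ ν :=
  ⟨fun x y => ⟨hA x y, (single_le_sum (fun y _ => hA x y) (mem_univ y)).trans
    ((hrow x).trans_le (le_one_of_mem_stdSimplex hμ x))⟩, hrow, hcol⟩

theorem IsCoupling.nonneg_right {A : V → V → ℝ} {μ ν : V → ℝ} (hA : IsCoupling A μ ν) (y : V) :
    0 ≤ ν y :=
  hA.2.2 y ▸ sum_nonneg fun x _ => (hA.1 x y).1

theorem isCoupling_mul {μ ν : V → ℝ} (hμ : μ ∈ stdSimplex ℝ V) (hν : ν ∈ stdSimplex ℝ V) :
    IsCoupling (fun x y => μ x * ν y) μ ν :=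
  .of_nonneg hμ (fun x y => mul_nonneg (hμ.1 x) (hν.1 y))
    (fun x => by rw [← mul_sum, hν.2, mul_one]) (fun y => by rw [← sum_mul, hμ.2, one_mul])

theorem isCoupling_diagonal [DecidableEq V] {μ : V → ℝ} (hμ : μ ∈ stdSimplex ℝ V) :
    IsCoupling (fun x y => if x = y then μ x else 0) μ μ :=
  .of_nonneg hμ (fun x y => by split_ifs <;> simp [hμ.1 x]) (fun x => by simp)
    (fun y => by simp)

theorem IsCoupling.convexComb {A B : V → V → ℝ} {μ ν μ' ν' : V → ℝ} {t : ℝ}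
    (hA : IsCoupling A μ ν) (hB : IsCoupling B μ' ν') (ht₀ : 0 ≤ t) (ht₁ : t ≤ 1) :
    IsCoupling (t • A + (1 - t) • B) (t • μ + (1 - t) • μ') (t • ν + (1 - t) • ν') := by
  refine ⟨fun x y => ⟨?_, ?_⟩, fun x => ?_, fun y => ?_⟩
  · have := (hA.1 x y).1; have := (hB.1 x y).1
    simp only [Pi.add_apply, Pi.smul_apply, smul_eq_mul]
    nlinarith
  · have := (hA.1 x y).2; have := (hB.1 x y).2
    simp only [Pi.add_apply, Pi.smul_apply, smul_eq_mul]
    nlinarith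
  · simp [sum_add_distrib, ← mul_sum, hA.2.1 x, hB.2.1 x]
  · simp [sum_add_distrib, ← mul_sum, hA.2.2 y, hB.2.2 y]

variable (G : SimpleGraph V)

theorem transportCost_convexComb (A B : V → V → ℝ) (t : ℝ) :
    transportCost G (t • A + (1 - t) • B) =
      t * transportCost G A + (1 - t) * transportCost G B := by
  simp only [transportCost, Pi.add_apply, Pi.smul_apply, smul_eq_mul, add_mul, sum_add_distrib,
    mul_sum, mul_assoc]

theorem wass_le_transportCost {A : V → V → ℝ} {μ ν : V → ℝ} (hA : IsCoupling A μ ν) :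
    Wass G μ ν ≤ transportCost G A :=
  csInf_le ⟨0, by
    rintro c ⟨B, hB, rfl⟩
    exact sum_nonneg fun x _ => sum_nonneg fun y _ => mul_nonneg (hB.1 x y).1 (Nat.cast_nonneg _)⟩
    ⟨A, hA, rfl⟩

theorem le_mul_wass {μ ν : V → ℝ} {s c : ℝ} (hs : 0 ≤ s) (hne : ∃ A, IsCoupling A μ ν)
    (h : ∀ A, IsCoupling A μ ν → c ≤ s * transportCost G A) : c ≤ s * Wass G μ ν := by
  obtain ⟨A₀, hA₀⟩ := hne
  rcases hs.eq_or_lt with rfl | hs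
  · simpa using h A₀ hA₀
  rw [← div_le_iff₀' hs]
  exact le_csInf ⟨_, A₀, hA₀, rfl⟩ fun _ ⟨A, hA, hc⟩ => hc ▸ (div_le_iff₀' hs).2 (h A hA)

theorem le_mul_wass_add_mul_wass {μ ν μ' ν' : V → ℝ} {s r c : ℝ} (hs : 0 ≤ s) (hr : 0 ≤ r)
    (h₁ : ∃ A, IsCoupling A μ ν) (h₂ : ∃ B, IsCoupling B μ' ν')
    (h : ∀ A B, IsCoupling A μ ν → IsCoupling B μ' ν' →
      c ≤ s * transportCost G A + r * transportCost G B) :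
    c ≤ s * Wass G μ ν + r * Wass G μ' ν' := by
  have key : ∀ A, IsCoupling A μ ν → c - r * Wass G μ' ν' ≤ s * transportCost G A :=
    fun A hA => by
      have := le_mul_wass G hr h₂ fun B hB => sub_le_iff_le_add'.2 (h A B hA hB)
      linarith
  linarith [le_mul_wass G hs h₁ key]

theorem wass_convexComb_le {μ ν μ' ν' : V → ℝ} {t : ℝ} (ht₀ : 0 ≤ t) (ht₁ : t ≤ 1)
    (h₁ : ∃ A, IsCoupling A μ ν) (h₂ : ∃ B, IsCoupling B μ' ν') :
    Wass G (t • μ + (1 - t) • μ') (t • ν + (1 - t) • ν') ≤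
      t * Wass G μ ν + (1 - t) * Wass G μ' ν' :=
  le_mul_wass_add_mul_wass G ht₀ (sub_nonneg.2 ht₁) h₁ h₂ fun A B hA hB =>
    (wass_le_transportCost G (hA.convexComb hB ht₀ ht₁)).trans_eq
      (transportCost_convexComb G A B t)

theorem wass_self_nonpos [DecidableEq V] {μ : V → ℝ} (hμ : μ ∈ stdSimplex ℝ V) :
    Wass G μ μ ≤ 0 :=
  (wass_le_transportCost G (isCoupling_diagonal hμ)).trans_eq <|
    sum_eq_zero fun x _ => sum_eq_zero fun y _ => by dsimp only; split_ifs with h <;> simp [h]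

theorem wass_single_le [DecidableEq V] (x y : V) :
    Wass G (Pi.single x 1) (Pi.single y 1) ≤ G.dist x y :=
  (wass_le_transportCost G (isCoupling_mul (single_mem_stdSimplex ℝ x)
    (single_mem_stdSimplex ℝ y))).trans_eq (by simp [transportCost, Pi.single_apply])

theorem sub_le_wass {μ ν f : V → ℝ} (hne : ∃ A, IsCoupling A μ ν)
    (hf : ∀ x y, f y - f x ≤ G.dist x y) :
    ∑ y, ν y * f y - ∑ x, μ x * f x ≤ Wass G μ ν := by
  rw [← one_mul (Wass G μ ν)]
  refine le_mul_wass G zero_le_one hne fun A hA => ?_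
  calc ∑ y, ν y * f y - ∑ x, μ x * f x = ∑ x, ∑ y, A x y * (f y - f x) := by
        simp only [mul_sub, sum_sub_distrib, ← sum_mul, ← hA.2.1]
        rw [sum_comm (f := fun x y => A x y * f y)]
        simp only [← sum_mul, hA.2.2]
    _ ≤ 1 * transportCost G A := by
        rw [one_mul]
        exact sum_le_sum fun x _ => sum_le_sum fun y _ =>
          mul_le_mul_of_nonneg_left (hf x y) (hA.1 x y).1

end Transport

section Gluing

variable {V : Type*} [Fintype V] {A B : V → V → ℝ} {μ ν ρ : V → ℝ}

/-- Gluing of two couplings along their common marginal `ν`. Where `ν y = 0` the division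
returns the junk value `0`, which is harmless since then `A x y = B y z = 0`. -/
noncomputable def glue (A B : V → V → ℝ) (ν : V → ℝ) : V → V → ℝ :=
  fun x z => ∑ y, A x y * B y z / ν y

theorem IsCoupling.sum_mul_div_right (hA : IsCoupling A μ ν) (hB : IsCoupling B ν ρ)
    (x y : V) : ∑ z, A x y * B y z / ν y = A x y := by
  by_cases hy : ν y = 0
  · have hAxy : A x y = 0 := (sum_eq_zero_iff_of_nonneg fun x _ => (hA.1 x y).1).1
      ((hA.2.2 y).trans hy) x (mem_univ x)
    simp [hAxy]
  · rw [← sum_div, ← mul_sum, hB.2.1 y, mul_div_cancel_right₀ _ hy]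

theorem IsCoupling.sum_mul_div_left (hA : IsCoupling A μ ν) (hB : IsCoupling B ν ρ)
    (y z : V) : ∑ x, A x y * B y z / ν y = B y z := by
  by_cases hy : ν y = 0
  · have hByz : B y z = 0 := (sum_eq_zero_iff_of_nonneg fun z _ => (hB.1 y z).1).1
      ((hB.2.1 y).trans hy) z (mem_univ z)
    simp [hByz]
  · rw [← sum_div, ← sum_mul, hA.2.2 y, mul_div_cancel_left₀ _ hy]

theorem IsCoupling.glue (hμ : μ ∈ stdSimplex ℝ V) (hA : IsCoupling A μ ν)
    (hB : IsCoupling B ν ρ) : IsCoupling (glue A B ν) μ ρ := by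
  refine .of_nonneg hμ (fun x z => sum_nonneg fun y _ => div_nonneg
      (mul_nonneg (hA.1 x y).1 (hB.1 y z).1) (hA.nonneg_right y)) (fun x => ?_) (fun z => ?_)
  · simp only [_root_.glue, sum_comm (γ := V) (f := fun z y => A x y * B y z / ν y),
      hA.sum_mul_div_right hB, hA.2.1]
  · simp only [_root_.glue, sum_comm (γ := V) (f := fun x y => A x y * B y z / ν y),
      hA.sum_mul_div_left hB, hB.2.2]

theorem transportCost_glue_le {G : SimpleGraph V} (hconn : G.Connected)
    (hA : IsCoupling A μ ν) (hB : IsCoupling B ν ρ) :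
    transportCost G (glue A B ν) ≤ transportCost G A + transportCost G B := by
  have hK : ∀ x y z, 0 ≤ A x y * B y z / ν y := fun x y z =>
    div_nonneg (mul_nonneg (hA.1 x y).1 (hB.1 y z).1) (hA.nonneg_right y)
  calc transportCost G (glue A B ν)
      = ∑ x, ∑ z, ∑ y, A x y * B y z / ν y * (G.dist x z : ℝ) := by
        simp only [transportCost, glue, sum_mul]
    _ ≤ ∑ x, ∑ z, ∑ y, A x y * B y z / ν y * ((G.dist x y : ℝ) + G.dist y z) := by
        gcongr with x _ z _ y _
        · exact hK x y z
        · exact_mod_cast hconn.dist_triangle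
    _ = ∑ x, ∑ y, (∑ z, A x y * B y z / ν y) * (G.dist x y : ℝ) +
          ∑ y, ∑ z, (∑ x, A x y * B y z / ν y) * (G.dist y z : ℝ) := by
        simp only [mul_add, sum_add_distrib, sum_mul]
        congr 1
        · exact sum_congr rfl fun x _ => sum_comm
        · refine (sum_congr rfl fun x _ => sum_comm).trans ?_
          rw [sum_comm]
          exact sum_congr rfl fun y _ => sum_comm
    _ = transportCost G A + transportCost G B := by
        simp only [hA.sum_mul_div_right hB, hA.sum_mul_div_left hB, transportCost]

theorem wass_triangle {G : SimpleGraph V} (hconn : G.Connected) (hμ : μ ∈ stdSimplex ℝ V)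
    (h₁ : ∃ A, IsCoupling A μ ν) (h₂ : ∃ B, IsCoupling B ν ρ) :
    Wass G μ ρ ≤ Wass G μ ν + Wass G ν ρ := by
  simpa using le_mul_wass_add_mul_wass G zero_le_one zero_le_one h₁ h₂ fun A B hA hB => by
    simpa using (wass_le_transportCost G (hA.glue hμ hB)).trans (transportCost_glue_le hconn hA hB)

end Gluing

section Curvature

open SimpleGraph

variable {V : Type*} [Fintype V] [DecidableEq V] (G : SimpleGraph V) [DecidableRel G.Adj]

theorem sum_mMeas_mul (α : ℝ) (x : V) (g : V → ℝ) :
    ∑ z, mMeas G α x z * g z =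
      α * g x + (1 - α) / G.degree x * ∑ z ∈ G.neighborFinset x, g z := by
  have hsplit : ∀ z, mMeas G α x z = (if z = x then α else 0) +
      if z ∈ G.neighborFinset x then (1 - α) / G.degree x else 0 := fun z => by
    by_cases hz : z = x <;> simp [mMeas, hz]
  simp only [hsplit, add_mul, ite_mul, zero_mul, sum_add_distrib, sum_ite_eq', mem_univ,
    if_true, sum_ite_mem, univ_inter, mul_sum]

theorem mMeas_mem_stdSimplex {x : V} (hx : 0 < G.degree x) {α : ℝ} (hα₀ : 0 ≤ α)
    (hα₁ : α ≤ 1) : mMeas G α x ∈ stdSimplex ℝ V := by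
  refine ⟨fun z => ?_, ?_⟩
  · unfold mMeas
    split_ifs
    exacts [hα₀, div_nonneg (sub_nonneg.2 hα₁) (Nat.cast_nonneg _), le_rfl]
  · have hx' : (G.degree x : ℝ) ≠ 0 := by positivity
    simpa [card_neighborFinset_eq_degree, hx'] using sum_mMeas_mul G α x 1

theorem mMeas_one (x : V) : mMeas G 1 x = Pi.single x 1 := by
  ext z
  by_cases hz : z = x <;> simp [mMeas, hz]

theorem mMeas_convexComb (t α β : ℝ) (x : V) :
    mMeas G (t * α + (1 - t) * β) x = t • mMeas G α x + (1 - t) • mMeas G β x := by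
  ext z
  simp only [mMeas, Pi.add_apply, Pi.smul_apply, smul_eq_mul]
  split_ifs <;> ring

theorem exists_isCoupling_mMeas {x y : V} (hx : 0 < G.degree x) (hy : 0 < G.degree y)
    {α : ℝ} (hα₀ : 0 ≤ α) (hα₁ : α ≤ 1) : ∃ A, IsCoupling A (mMeas G α x) (mMeas G α y) :=
  ⟨_, isCoupling_mul (mMeas_mem_stdSimplex G hx hα₀ hα₁) (mMeas_mem_stdSimplex G hy hα₀ hα₁)⟩

theorem abs_sum_mMeas_mul_sub_le {x : V} (hx : 0 < G.degree x) {α : ℝ} (hα₁ : α ≤ 1)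
    {g : V → ℝ} (hg : ∀ z, G.Adj x z → |g z - g x| ≤ 1) :
    |∑ z, mMeas G α x z * g z - g x| ≤ 1 - α := by
  have hx' : (G.degree x : ℝ) ≠ 0 := by positivity
  have hc : 0 ≤ (1 - α) / G.degree x := div_nonneg (sub_nonneg.2 hα₁) (Nat.cast_nonneg _)
  have hdev : ∑ z, mMeas G α x z * g z - g x =
      (1 - α) / G.degree x * ∑ z ∈ G.neighborFinset x, (g z - g x) := by
    rw [sum_mMeas_mul, sum_sub_distrib, sum_const, card_neighborFinset_eq_degree, nsmul_eq_mul]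
    field_simp
    ring
  calc |∑ z, mMeas G α x z * g z - g x|
      ≤ (1 - α) / G.degree x * ∑ z ∈ G.neighborFinset x, (1 : ℝ) := by
        rw [hdev, abs_mul, abs_of_nonneg hc]
        gcongr
        exact (abs_sum_le_sum_abs _ _).trans
          (sum_le_sum fun z hz => hg z ((G.mem_neighborFinset x z).1 hz))
    _ = 1 - α := by
        rw [sum_const, card_neighborFinset_eq_degree, nsmul_one]
        field_simp

theorem dist_sub_le_wass_mMeas (hconn : G.Connected) {x y : V} (hx : 0 < G.degree x)
    (hy : 0 < G.degree y) {α : ℝ} (hα₀ : 0 ≤ α) (hα₁ : α ≤ 1) :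
    G.dist x y - 2 * (1 - α) ≤ Wass G (mMeas G α x) (mMeas G α y) := by
  set g : V → ℝ := fun z => G.dist x z
  have hLip : ∀ u v, g v - g u ≤ G.dist u v := fun u v => by
    simp only [g, sub_le_iff_le_add']
    exact_mod_cast hconn.dist_triangle
  have hg : ∀ u z, G.Adj u z → |g z - g u| ≤ 1 := fun u z huz => by
    have h₁ := hLip u z
    have h₂ := hLip z u
    rw [dist_eq_one_iff_adj.2 huz] at h₁
    rw [dist_eq_one_iff_adj.2 huz.symm] at h₂
    rw [abs_le]
    constructor <;> push_cast at h₁ h₂ <;> linarith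
  have hmx := abs_le.1 (abs_sum_mMeas_mul_sub_le G hx hα₁ (hg x))
  have hmy := abs_le.1 (abs_sum_mMeas_mul_sub_le G hy hα₁ (hg y))
  have hW := sub_le_wass G (exists_isCoupling_mMeas G hx hy hα₀ hα₁) hLip
  simp only [g, dist_self, Nat.cast_zero] at hmx hmy hW ⊢
  linarith [hmx.2, hmy.1]

theorem wass_mMeas_of_adj {x y : V} (h : G.Adj x y) (α : ℝ) :
    Wass G (mMeas G α x) (mMeas G α y) = 1 - kappaAlpha G α x y := by
  simp [kappaAlpha, dist_eq_one_iff_adj.2 h]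

theorem kappaAlpha_le_of_adj (hconn : G.Connected) {x y : V} (h : G.Adj x y) {α : ℝ}
    (hα₀ : 0 ≤ α) (hα₁ : α ≤ 1) : kappaAlpha G α x y ≤ 2 * (1 - α) := by
  have := dist_sub_le_wass_mMeas G hconn h.degree_pos_left h.degree_pos_right hα₀ hα₁
  rw [wass_mMeas_of_adj G h, dist_eq_one_iff_adj.2 h] at this
  push_cast at this
  linarith

theorem wass_mMeas_le_length_sub_sum_kappaAlpha (hconn : G.Connected)
    (hd : ∀ v, 0 < G.degree v) {α : ℝ} (hα₀ : 0 ≤ α) (hα₁ : α ≤ 1) {x y : V}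
    (p : G.Walk x y) :
    Wass G (mMeas G α x) (mMeas G α y) ≤
      p.length - (p.darts.map fun d => kappaAlpha G α d.fst d.snd).sum := by
  induction p with
  | nil => simpa using wass_self_nonpos G (mMeas_mem_stdSimplex G (hd _) hα₀ hα₁)
  | @cons u v w h p ih =>
    calc Wass G (mMeas G α u) (mMeas G α w)
        ≤ Wass G (mMeas G α u) (mMeas G α v) + Wass G (mMeas G α v) (mMeas G α w) :=
          wass_triangle hconn (mMeas_mem_stdSimplex G (hd u) hα₀ hα₁)
            (exists_isCoupling_mMeas G (hd u) (hd v) hα₀ hα₁)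
            (exists_isCoupling_mMeas G (hd v) (hd w) hα₀ hα₁)
      _ ≤ (1 - kappaAlpha G α u v) +
            (p.length - (p.darts.map fun d => kappaAlpha G α d.fst d.snd).sum) := by
          rw [wass_mMeas_of_adj G h]
          gcongr
      _ = _ := by
          simp only [Walk.length_cons, Walk.darts_cons, List.map_cons,
            List.sum_cons, Nat.cast_succ]
          ring

theorem sum_kappaAlpha_div_le_of_length_eq_dist (hconn : G.Connected)
    (hd : ∀ v, 0 < G.degree v) {α : ℝ} (hα₀ : 0 ≤ α) (hα₁ : α < 1) {x y : V}
    (p : G.Walk x y) (hp : p.length = G.dist x y) :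
    (p.darts.map fun d => kappaAlpha G α d.fst d.snd / (1 - α)).sum ≤ 2 := by
  have hup := wass_mMeas_le_length_sub_sum_kappaAlpha G hconn hd hα₀ hα₁.le p
  have hlow := dist_sub_le_wass_mMeas G hconn (hd x) (hd y) hα₀ hα₁.le
  rw [hp] at hup
  simp only [div_eq_mul_inv, List.sum_map_mul_right]
  rw [← div_eq_mul_inv, div_le_iff₀ (sub_pos.2 hα₁)]
  linarith

theorem wass_mMeas_convexComb_le {x y : V} (hx : 0 < G.degree x) (hy : 0 < G.degree y)
    {α t : ℝ} (hα₀ : 0 ≤ α) (hα₁ : α ≤ 1) (ht₀ : 0 ≤ t) (ht₁ : t ≤ 1) :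
    Wass G (mMeas G (t * α + (1 - t)) x) (mMeas G (t * α + (1 - t)) y) ≤
      t * Wass G (mMeas G α x) (mMeas G α y) + (1 - t) * G.dist x y := by
  have hmix := mMeas_convexComb G t α 1
  simp only [mul_one, mMeas_one] at hmix
  rw [hmix, hmix]
  refine (wass_convexComb_le G ht₀ ht₁ (exists_isCoupling_mMeas G hx hy hα₀ hα₁)
    ⟨_, isCoupling_mul (single_mem_stdSimplex ℝ x) (single_mem_stdSimplex ℝ y)⟩).trans ?_
  gcongr
  exact wass_single_le G x y

theorem mul_kappaAlpha_le_kappaAlpha_convexComb {x y : V} (hx : 0 < G.degree x)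
    (hy : 0 < G.degree y) {α t : ℝ} (hα₀ : 0 ≤ α) (hα₁ : α ≤ 1) (ht₀ : 0 ≤ t) (ht₁ : t ≤ 1) :
    t * kappaAlpha G α x y ≤ kappaAlpha G (t * α + (1 - t)) x y := by
  have hW := wass_mMeas_convexComb_le G hx hy hα₀ hα₁ ht₀ ht₁
  set D : ℝ := (G.dist x y : ℝ)
  set W := Wass G (mMeas G α x) (mMeas G α y)
  have hD : 0 ≤ D := Nat.cast_nonneg _
  have key : Wass G (mMeas G (t * α + (1 - t)) x) (mMeas G (t * α + (1 - t)) y) / D ≤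
      t * (W / D) + (1 - t) :=
    calc _ ≤ (t * W + (1 - t) * D) / D := div_le_div_of_nonneg_right hW hD
      _ = t * (W / D) + (1 - t) * (D / D) := by ring
      _ ≤ t * (W / D) + (1 - t) := by
          -- `D / D ≤ 1` rather than `= 1`, so that `x = y` (junk `D = 0`) needs no separate case
          gcongr
          exact mul_le_of_le_one_right (sub_nonneg.2 ht₁) (div_self_le_one D)
  simp only [kappaAlpha]
  linarith

theorem kappaAlpha_div_monotoneOn {x y : V} (hx : 0 < G.degree x) (hy : 0 < G.degree y) :
    MonotoneOn (fun α => kappaAlpha G α x y / (1 - α)) (Set.Ico 0 1) := by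
  intro a ha b hb hab
  have ha' : 0 < 1 - a := sub_pos.2 ha.2
  have hb' : 0 < 1 - b := sub_pos.2 hb.2
  set t := (1 - b) / (1 - a)
  have hta : t * (1 - a) = 1 - b := div_mul_cancel₀ _ ha'.ne'
  have hmix : t * a + (1 - t) = b := by linarith
  have key := mul_kappaAlpha_le_kappaAlpha_convexComb G hx hy ha.1 ha.2.le
    (div_nonneg hb'.le ha'.le) ((div_le_one ha').2 (by linarith))
  rw [hmix] at key
  rw [div_le_div_iff₀ ha' hb', ← hta]
  nlinarith

theorem tendsto_kappaAlpha_div_kappa (hconn : G.Connected) {x y : V} (h : G.Adj x y) :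
    Tendsto (fun α => kappaAlpha G α x y / (1 - α)) (𝓝[<] 1) (𝓝 (kappa G x y)) := by
  have hmono := (kappaAlpha_div_monotoneOn G h.degree_pos_left h.degree_pos_right).mono
    Set.Ioo_subset_Ico_self
  have hbdd : BddAbove ((fun α => kappaAlpha G α x y / (1 - α)) '' Set.Ioo 0 1) := by
    refine ⟨2, ?_⟩
    rintro _ ⟨α, hα, rfl⟩
    exact (div_le_iff₀ (sub_pos.2 hα.2)).2 (kappaAlpha_le_of_adj G hconn h hα.1.le hα.2.le)
  have hlim := hmono.tendsto_nhdsWithin_Ioo_left ⟨1 / 2, by norm_num⟩ hbdd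
  rwa [kappa, hlim.limUnder_eq]

end Curvature

theorem stmt12_general {V : Type*} [Fintype V] [DecidableEq V]
    (G : SimpleGraph V) [DecidableRel G.Adj]
    (hconn : G.Connected)
    (κ₀ : ℝ) (hκ₀ : 0 < κ₀) (h : ∀ x y : V, G.Adj x y → κ₀ ≤ kappa G x y) :
    ∀ x y : V, (G.dist x y : ℝ) ≤ 2 / κ₀ := by
  intro x y
  rcases eq_or_ne x y with rfl | hxy
  · rw [SimpleGraph.dist_self, Nat.cast_zero]
    positivity
  have : Nontrivial V := ⟨⟨x, y, hxy⟩⟩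
  have hd : ∀ v, 0 < G.degree v := fun v => hconn.preconnected.degree_pos_of_nontrivial v
  obtain ⟨p, hp⟩ := hconn.exists_walk_length_eq_dist x y
  have hsum : (p.darts.map fun d => kappa G d.fst d.snd).sum ≤ 2 := by
    refine le_of_tendsto
      (tendsto_list_sum _ fun d _ => tendsto_kappaAlpha_div_kappa G hconn d.adj) ?_
    filter_upwards [Ioo_mem_nhdsLT zero_lt_one] with α hα
    exact sum_kappaAlpha_div_le_of_length_eq_dist G hconn hd hα.1.le hα.2 p hp
  have hlow : G.dist x y * κ₀ ≤ (p.darts.map fun d => kappa G d.fst d.snd).sum := by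
    rw [← hp, ← p.length_darts, ← List.length_map (f := fun d : G.Dart => kappa G d.fst d.snd),
      ← nsmul_eq_mul]
    refine List.card_nsmul_le_sum _ _ fun k hk => ?_
    obtain ⟨d, -, rfl⟩ := List.mem_map.1 hk
    exact h _ _ d.adj
  rw [le_div_iff₀ hκ₀]
  linarith

theorem stmt12 {V : Type*} [Fintype V] [DecidableEq V]
    (G : SimpleGraph V) [DecidableRel G.Adj]
    (hconn : G.Connected) (hcard : 1 < Fintype.card V)
    (κ₀ : ℝ) (hκ₀ : 0 < κ₀) (h : ∀ x y : V, G.Adj x y → κ₀ ≤ kappa G x y) :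
    ∀ x y : V, (G.dist x y : ℝ) ≤ 2 / κ₀ :=
  stmt12_general G hconn κ₀ hκ₀ h
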